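/- Consider a mass-action chemical reaction network with N species and M reversible reactions, with chemical potentials μ_j(c_j) = μ_j^0 + ln c_j and Gibbs free energy G(c) = Σ_{j=1}^N μ_j(c_j) c_j − Σ_{j=1}^N c_j + G^0. Suppose c^{eq} in the open positive orthant is an equilibrium satisfying detailed balance, R_i^+(c^{eq}) = R_i^-(c^{eq}) for all i = 1,…,M, and that the compatibility relation ln(k_i^+/k_i^-) = Σ_{j=1}^N (ν⁺_{ij} − ν⁻_{ij}) μ_j^0 holds for every i. Let c(t), t ≥ 0, be a differentiable solution of the chemical rate equations in the open positive orthant whose initial value lies in the same stoichiometric compatibility class as c^{eq}, i.e., c(0) − c^{eq} belongs to the linear span of the net stoichiometric vectors ν_1, …, ν_M. Then G(c(t)) − G(c^{eq}) = Σ_{j=1}^N [ c_j(t) ln( c_j(t)/c_j^{eq} ) − (c_j(t) − c_j^{eq}) ] ≥ 0 for all t ≥ 0; in particular the Gibbs free energy attains its minimum over the trajectory at the equilibrium. -/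

import Mathlib

/-!
The vector `w = μ⁰ + log c^{eq}` is orthogonal to every net stoichiometric vector: taking
logarithms in detailed balance and comparing with the compatibility relation gives
`ν_i ⬝ w = 0`. Hence `c ⬝ w` is conserved along the rate equations (whose right-hand side lies
in the stoichiometric span), and `(c - c^{eq}) ⬝ w` vanishes at `t = 0`, hence for all `t`,
because `c(0) - c^{eq}` lies in that span.
Expanding `G(c) - G(c^{eq})` produces exactly the relative entropy plus `(c - c^{eq}) ⬝ w`, and
each term `x log (x / a) - (x - a) = a · klFun (x / a)` of the relative entropy is nonnegative.
-/

open Finset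

theorem dotProduct_eq_zero_of_mem_span {R ι κ : Type*} [CommSemiring R] [Fintype ι] [Fintype κ]
    {v : κ → ι → R} {w x : ι → R} (hv : ∀ k, v k ⬝ᵥ w = 0)
    (hx : x ∈ Submodule.span R (Set.range v)) : x ⬝ᵥ w = 0 := by
  obtain ⟨r, rfl⟩ := (Submodule.mem_span_range_iff_exists_fun R).mp hx
  simp [sum_dotProduct, smul_dotProduct, hv]

theorem sum_mul_mem_span_range {R ι κ : Type*} [CommSemiring R] [Fintype κ] (v : κ → ι → R)
    (r : κ → R) : (fun j => ∑ k, v k j * r k) ∈ Submodule.span R (Set.range v) := by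
  refine (Submodule.mem_span_range_iff_exists_fun R).mpr ⟨r, ?_⟩
  ext j
  simp [Finset.sum_apply, mul_comm]

theorem dotProduct_eq_of_hasDerivAt {ι : Type*} [Fintype ι] {c c' : ℝ → ι → ℝ} {w : ι → ℝ}
    (hc : ∀ t j, HasDerivAt (fun u => c u j) (c' t j) t) (hc' : ∀ t, c' t ⬝ᵥ w = 0)
    (s t : ℝ) : c t ⬝ᵥ w = c s ⬝ᵥ w := by
  have hderiv : ∀ t, HasDerivAt (fun u => c u ⬝ᵥ w) 0 t := fun t => by
    rw [← hc' t]
    exact HasDerivAt.fun_sum fun j _ => (hc t j).mul_const (w j)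
  exact is_const_of_deriv_eq_zero (fun t => (hderiv t).differentiableAt)
    (fun t => (hderiv t).deriv) t s

theorem Real.log_mul_prod_pow {ι : Type*} [Fintype ι] {k : ℝ} {x : ι → ℝ} (hk : 0 < k)
    (hx : ∀ j, 0 < x j) (n : ι → ℕ) :
    Real.log (k * ∏ j, x j ^ n j) = Real.log k + ∑ j, (n j : ℝ) * Real.log (x j) := by
  rw [Real.log_mul hk.ne' (prod_pos fun j _ => pow_pos (hx j) _).ne',
    Real.log_prod fun j _ => (pow_pos (hx j) _).ne']
  simp [Real.log_pow]

theorem dotProduct_chemPotential_eq_zero_of_detailedBalance {ι : Type*} [Fintype ι]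
    {νp νm : ι → ℕ} {kp km : ℝ} (hkp : 0 < kp) (hkm : 0 < km) {μ0 ceq : ι → ℝ}
    (hcompat : Real.log (kp / km) = ∑ j, ((νp j : ℝ) - νm j) * μ0 j)
    (hceq : ∀ j, 0 < ceq j) (hdb : kp * ∏ j, ceq j ^ νp j = km * ∏ j, ceq j ^ νm j) :
    (fun j => (νm j : ℝ) - νp j) ⬝ᵥ (fun j => μ0 j + Real.log (ceq j)) = 0 := by
  have hlog := congrArg Real.log hdb
  rw [Real.log_mul_prod_pow hkp hceq, Real.log_mul_prod_pow hkm hceq] at hlog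
  rw [Real.log_div hkp.ne' hkm.ne'] at hcompat
  simp only [dotProduct, mul_add, sub_mul, sum_add_distrib, sum_sub_distrib] at hcompat hlog ⊢
  linarith

theorem mul_log_div_sub_sub_nonneg {x a : ℝ} (hx : 0 < x) (ha : 0 < a) :
    0 ≤ x * Real.log (x / a) - (x - a) := by
  have key : x * Real.log (x / a) - (x - a) = a * InformationTheory.klFun (x / a) := by
    rw [InformationTheory.klFun]
    field_simp
    ring
  exact key ▸ mul_nonneg ha.le (InformationTheory.klFun_nonneg (div_pos hx ha).le)

theorem gibbs_sub_gibbs_eq_sum_add_dotProduct {ι : Type*} [Fintype ι] (μ0 : ι → ℝ) (G0 : ℝ)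
    {x a : ι → ℝ} (hx : ∀ j, 0 < x j) (ha : ∀ j, 0 < a j) :
    (∑ j, (μ0 j + Real.log (x j)) * x j - ∑ j, x j + G0)
        - (∑ j, (μ0 j + Real.log (a j)) * a j - ∑ j, a j + G0)
      = ∑ j, (x j * Real.log (x j / a j) - (x j - a j))
        + (x - a) ⬝ᵥ fun j => μ0 j + Real.log (a j) := by
  simp only [dotProduct, Pi.sub_apply, ← sum_sub_distrib, ← sum_add_distrib,
    add_sub_add_right_eq_sub]
  refine sum_congr rfl fun j _ => ?_
  rw [Real.log_div (hx j).ne' (ha j).ne']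
  ring

/-- **The Gibbs free energy attains its minimum at a detailed-balanced
equilibrium.** Consider a mass-action network with rate functions
`R⁺_i(c) = kp i ∏_l c_l^{νp i l}`, `R⁻_i(c) = km i ∏_l c_l^{νm i l}`,
chemical potentials `μ_j(c_j) = μ0 j + ln c_j`, Gibbs free energy
`G(c) = Σ_j μ_j(c_j) c_j − Σ_j c_j + G0`, an equilibrium `ceq > 0` with
detailed balance `R⁺_i(ceq) = R⁻_i(ceq)` for all `i`, and compatibility
`ln(kp i / km i) = Σ_j (νp i j − νm i j) μ0 j`.  If a positive solution
`c(t)` of the rate equations starts in the stoichiometric compatibility class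
of `ceq`, then for all `t ≥ 0`:
`G(c(t)) − G(ceq) = Σ_j [ c_j ln(c_j/ceq_j) − (c_j − ceq_j) ] ≥ 0`. -/
theorem gibbs_free_energy_min_at_equilibrium
    {N M : ℕ} (νp νm : Fin M → Fin N → ℕ) (kp km : Fin M → ℝ)
    (hkp : ∀ i, 0 < kp i) (hkm : ∀ i, 0 < km i)
    (μ0 : Fin N → ℝ) (G0 : ℝ)
    (hcompat : ∀ i, Real.log (kp i / km i)
      = ∑ j, ((νp i j : ℝ) - (νm i j : ℝ)) * μ0 j)
    (ceq : Fin N → ℝ) (hceq : ∀ j, 0 < ceq j)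
    (hdb : ∀ i, kp i * ∏ l, ceq l ^ νp i l = km i * ∏ l, ceq l ^ νm i l)
    (c : ℝ → Fin N → ℝ) (hcpos : ∀ t j, 0 < c t j)
    (hcderiv : ∀ t j, HasDerivAt (fun u => c u j)
      (∑ i, ((νm i j : ℝ) - (νp i j : ℝ)) *
        (kp i * ∏ l, c t l ^ νp i l - km i * ∏ l, c t l ^ νm i l)) t)
    (hinit : (fun j => c 0 j - ceq j) ∈
      Submodule.span ℝ (Set.range fun i : Fin M =>
        fun j : Fin N => ((νm i j : ℝ) - (νp i j : ℝ)))) :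
    ∀ t : ℝ, 0 ≤ t →
      ((∑ j, (μ0 j + Real.log (c t j)) * c t j - ∑ j, c t j + G0)
        - (∑ j, (μ0 j + Real.log (ceq j)) * ceq j - ∑ j, ceq j + G0)
        = ∑ j, (c t j * Real.log (c t j / ceq j) - (c t j - ceq j)))
      ∧ 0 ≤ ∑ j, (c t j * Real.log (c t j / ceq j) - (c t j - ceq j)) := by
  intro t _
  set w : Fin N → ℝ := fun j => μ0 j + Real.log (ceq j)
  set ν : Fin M → Fin N → ℝ := fun i j => (νm i j : ℝ) - νp i j
  have hνw : ∀ i, ν i ⬝ᵥ w = 0 := fun i =>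
    dotProduct_chemPotential_eq_zero_of_detailedBalance (hkp i) (hkm i) (hcompat i) hceq (hdb i)
  have hconserved : (c t - ceq) ⬝ᵥ w = 0 := by
    have hflow := dotProduct_eq_of_hasDerivAt hcderiv
      (fun _ => dotProduct_eq_zero_of_mem_span hνw (sum_mul_mem_span_range ν _)) 0 t
    rw [sub_dotProduct, hflow, ← sub_dotProduct]
    exact dotProduct_eq_zero_of_mem_span hνw hinit
  rw [gibbs_sub_gibbs_eq_sum_add_dotProduct μ0 G0 (hcpos t) hceq, hconserved, add_zero]
  exact ⟨rfl, sum_nonneg fun j _ => mul_log_div_sub_sub_nonneg (hcpos t j) (hceq j)⟩
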